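/- arXiv:1610.02534 — 3 statements merged into one kernel-verified Lean document; each statement's English description precedes it below -/
import Mathlib

section
/- Let F : {0,…,255} → {0,…,255} be such that F(x ⊕ 128) = F(x) ⊕ 128 for all x (i.e., F commutes with flipping the MSB). If there exists x₁ ∈ {0,…,255} such that F(x₁) ⊕ F(x₁ ⊕ d) = d for all d ∈ {1,…,127}, then F(x) = x ⊕ F(0) for all x. -/
set_option maxRecDepth 4000

lemma stmt_9_aux : ∀ d < 256, 128 ≤ d → d ^^^ 128 ≤ 127 ∧ (d ^^^ 128) ^^^ 128 = d := by decide

lemma stmt_9_xorlt : ∀ a < 256, ∀ b < 256, a ^^^ b < 256 := by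
  intro a ha b hb
  have : a ^^^ b < 2 ^ 8 := Nat.xor_lt_two_pow ha hb
  simpa using this

/-- If `F : {0,…,255} → {0,…,255}` commutes with flipping the MSB, i.e.
`F(x ⊕ 128) = F(x) ⊕ 128`, and there is `x₁` such that
`F(x₁) ⊕ F(x₁ ⊕ d) = d` for all `d ∈ {1,…,127}`, then `F(x) = x ⊕ F(0)`. -/
theorem stmt_9 (F : ℕ → ℕ) (hF : ∀ x < 256, F x < 256)
    (hMSB : ∀ x < 256, F (x ^^^ 128) = F x ^^^ 128)
    (h : ∃ x₁ < 256, ∀ d, 1 ≤ d → d ≤ 127 → F x₁ ^^^ F (x₁ ^^^ d) = d) :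
    ∀ x < 256, F x = x ^^^ F 0 := by
  obtain ⟨x₁, hx₁, hd⟩ := h
  have small : ∀ d ≤ 127, F (x₁ ^^^ d) = F x₁ ^^^ d := by
    intro d hd127
    rcases Nat.eq_zero_or_pos d with rfl | hpos
    · simp
    · have hh := hd d hpos hd127
      calc F (x₁ ^^^ d) = F x₁ ^^^ (F x₁ ^^^ F (x₁ ^^^ d)) := by
            rw [← Nat.xor_assoc, Nat.xor_self, Nat.zero_xor]
        _ = F x₁ ^^^ d := by rw [hh]
  have key : ∀ d < 256, F (x₁ ^^^ d) = F x₁ ^^^ d := by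
    intro d hd256
    rcases lt_or_ge d 128 with h1 | h1
    · exact small d (by omega)
    · obtain ⟨hle, heq⟩ := stmt_9_aux d hd256 h1
      have hx1d' : x₁ ^^^ (d ^^^ 128) < 256 := stmt_9_xorlt x₁ hx₁ _ (by omega)
      calc F (x₁ ^^^ d) = F ((x₁ ^^^ (d ^^^ 128)) ^^^ 128) := by
            rw [Nat.xor_assoc, heq]
        _ = F (x₁ ^^^ (d ^^^ 128)) ^^^ 128 := hMSB _ hx1d'
        _ = (F x₁ ^^^ (d ^^^ 128)) ^^^ 128 := by rw [small _ hle]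
        _ = F x₁ ^^^ d := by rw [Nat.xor_assoc, heq]
  intro x hx
  have hxd : x₁ ^^^ (x₁ ^^^ x) = x := by
    rw [← Nat.xor_assoc, Nat.xor_self, Nat.zero_xor]
  have h1 : F x = F x₁ ^^^ (x₁ ^^^ x) := by
    calc F x = F (x₁ ^^^ (x₁ ^^^ x)) := by rw [hxd]
      _ = F x₁ ^^^ (x₁ ^^^ x) := key _ (stmt_9_xorlt x₁ hx₁ x hx)
  have h0 : F 0 = F x₁ ^^^ x₁ := by
    have := key x₁ hx₁
    simpa using this
  rw [h1, h0, ← Nat.xor_assoc, Nat.xor_comm x (F x₁ ^^^ x₁)]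
end

section
/- Let F : {0,…,2^n − 1} → {0,…,2^n − 1} be F = G_{2m+1} ∘ ⋯ ∘ G_1, where G_{2i}(x) = x ⊕ α_i for i = 1,…,m and G_{2i+1}(x) = (x + β_i) mod 2^n for i = 0,…,m, with α_i, β_i ∈ {0,…,2^n − 1}. If F(x) = x ⊕ γ for all x and some fixed γ, then γ ≡ α_1 ⊕ ⋯ ⊕ α_m (mod 2^{n−1}). -/
/-!
Fix `k` with `k + 2 ≤ n` and follow the orbits of `x` and `x ⊕ 2^k` through the composition,
modulo `2^(k+2)`. Their difference stays of the form `2^k (1 + 2c)`: modular addition keeps the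
arithmetic difference, XOR keeps the XOR difference, and converting between the two
(`u ⊕ 2^k ⊕ 2^(k+1)s ≡ u + 2^k (1 + 2(s ⊕ u_k))`) shows that XOR with `α_i` flips `c` by the
bit `(α_i)_k`. Starting from `c = x_k`, after the whole chain `c = x_k ⊕ (α_1 ⊕ ⋯ ⊕ α_m)_k`.
For `x = 0` the difference is `(γ ⊕ 2^k) - γ ≡ 2^k (1 + 2γ_k)`, so `γ_k = (α_1 ⊕ ⋯ ⊕ α_m)_k`.
-/

/-- The alternating composition
`F = G_{2m+1} ∘ ⋯ ∘ G_1` with `G_{2i}(x) = x ⊕ α_i` (`i = 1,…,m`) and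
`G_{2i+1}(x) = (x + β_i) mod 2^n` (`i = 0,…,m`): first add `β 0`, then for
`i = 1,…,m` XOR `α i` and add `β i`. -/
def altComp (n m : ℕ) (α β : ℕ → ℕ) : ℕ → ℕ :=
  (List.range m).foldl
    (fun f i => fun x => ((f x ^^^ α (i + 1)) + β (i + 1)) % 2 ^ n)
    (fun x => (x + β 0) % 2 ^ n)

namespace Nat

theorem xor_one_add_two_mul_mod_two (t : ℕ) : (t ^^^ 1) + 2 * (t % 2) = t + 1 := by
  have hdiv : (t ^^^ 1) / 2 = t / 2 := by rw [xor_div_two]; simp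
  have hmod : (t ^^^ 1) % 2 = (t + 1) % 2 := xor_mod_two_eq
  omega

theorem xor_two_pow_add_two_pow_mul_testBit (u k : ℕ) :
    (u ^^^ 2 ^ k) + 2 ^ (k + 1) * (u.testBit k).toNat = u + 2 ^ k := by
  have hdiv : (u ^^^ 2 ^ k) / 2 ^ k = u / 2 ^ k ^^^ 1 := by
    rw [xor_div_two_pow, Nat.div_self (Nat.two_pow_pos k)]
  have hmod : (u ^^^ 2 ^ k) % 2 ^ k = u % 2 ^ k := by
    rw [xor_mod_two_pow, mod_self, xor_zero]
  have hw := div_add_mod (u ^^^ 2 ^ k) (2 ^ k)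
  rw [hdiv, hmod] at hw
  have hu := div_add_mod u (2 ^ k)
  have hbit := xor_one_add_two_mul_mod_two (u / 2 ^ k)
  rw [toNat_testBit]
  zify at hw hu hbit ⊢
  linear_combination -hw + 2 ^ k * hbit + hu

theorem xor_two_pow_xor_modEq (u k : ℕ) (s : Bool) :
    u ^^^ 2 ^ k ^^^ 2 ^ (k + 1) * s.toNat
      ≡ u + 2 ^ k * (1 + 2 * (s ^^ u.testBit k).toNat) [MOD 2 ^ (k + 2)] := by
  have e₁ := xor_two_pow_add_two_pow_mul_testBit u k
  have e₂ := xor_two_pow_add_two_pow_mul_testBit (u ^^^ 2 ^ k) (k + 1)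
  refine (ZMod.natCast_eq_natCast_iff _ _ _).1 ?_
  have h₀ : ((2 ^ (k + 2) : ℕ) : ZMod (2 ^ (k + 2))) = 0 := ZMod.natCast_self _
  apply_fun ((↑) : ℕ → ZMod (2 ^ (k + 2))) at e₁ e₂
  generalize u.testBit k = b at e₁ ⊢
  generalize (u ^^^ 2 ^ k).testBit (k + 1) = b' at e₂
  cases s
  · simp only [Bool.toNat_false, mul_zero, xor_zero, Bool.false_xor]
    push_cast at e₁ h₀ ⊢
    linear_combination e₁ - (b.toNat : ZMod (2 ^ (k + 2))) * h₀
  · have hnot : ((!b).toNat : ZMod (2 ^ (k + 2))) = 1 - b.toNat := by cases b <;> simp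
    simp only [Bool.toNat_true, mul_one, Bool.true_xor]
    push_cast [hnot] at e₁ e₂ h₀ ⊢
    linear_combination e₁ + e₂ - (b'.toNat : ZMod (2 ^ (k + 2))) * h₀

theorem xor_two_pow_modEq (u k : ℕ) :
    u ^^^ 2 ^ k ≡ u + 2 ^ k * (1 + 2 * (u.testBit k).toNat) [MOD 2 ^ (k + 2)] := by
  simpa using xor_two_pow_xor_modEq u k false

namespace ModEq

protected theorem xor {j a b c d : ℕ} (h₁ : a ≡ b [MOD 2 ^ j]) (h₂ : c ≡ d [MOD 2 ^ j]) :
    a ^^^ c ≡ b ^^^ d [MOD 2 ^ j] := by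
  unfold Nat.ModEq at *
  rw [xor_mod_two_pow, h₁, h₂, ← xor_mod_two_pow]

theorem xor_of_add_two_pow_mul {u v k : ℕ} {c : Bool}
    (h : v ≡ u + 2 ^ k * (1 + 2 * c.toNat) [MOD 2 ^ (k + 2)]) (a : ℕ) :
    v ^^^ a ≡ (u ^^^ a) + 2 ^ k * (1 + 2 * (c ^^ a.testBit k).toNat) [MOD 2 ^ (k + 2)] := by
  set s := c ^^ u.testBit k
  have hv : v ≡ u ^^^ 2 ^ k ^^^ 2 ^ (k + 1) * s.toNat [MOD 2 ^ (k + 2)] := by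
    refine h.trans (ModEq.symm ?_)
    simpa [s] using xor_two_pow_xor_modEq u k s
  calc v ^^^ a ≡ (u ^^^ 2 ^ k ^^^ 2 ^ (k + 1) * s.toNat) ^^^ a [MOD 2 ^ (k + 2)] := hv.xor rfl
    _ = (u ^^^ a) ^^^ 2 ^ k ^^^ 2 ^ (k + 1) * s.toNat := by ac_rfl
    _ ≡ _ [MOD 2 ^ (k + 2)] := xor_two_pow_xor_modEq _ k s
    _ = _ := by simp [s, testBit_xor]

theorem add_right_mod_two_pow {j n u v d : ℕ} (hj : j ≤ n) (h : v ≡ u + d [MOD 2 ^ j])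
    (b : ℕ) : (v + b) % 2 ^ n ≡ (u + b) % 2 ^ n + d [MOD 2 ^ j] := by
  have hmod : ∀ y, y % 2 ^ n ≡ y [MOD 2 ^ j] := fun y =>
    (mod_modEq y _).of_dvd (pow_dvd_pow 2 hj)
  calc (v + b) % 2 ^ n ≡ v + b [MOD 2 ^ j] := hmod _
    _ ≡ u + d + b [MOD 2 ^ j] := h.add_right b
    _ = (u + b) + d := by ring
    _ ≡ _ [MOD 2 ^ j] := (hmod _).symm.add_right d

end ModEq

end Nat

def xorSum (α : ℕ → ℕ) (m : ℕ) : ℕ :=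
  ((List.range m).map fun i => α (i + 1)).foldr (· ^^^ ·) 0

@[simp] theorem xorSum_zero (α : ℕ → ℕ) : xorSum α 0 = 0 := rfl

theorem xorSum_succ (α : ℕ → ℕ) (m : ℕ) : xorSum α (m + 1) = xorSum α m ^^^ α (m + 1) := by
  rw [xorSum, List.range_succ, List.map_append, List.foldr_append]
  simp only [List.map_cons, List.map_nil, List.foldr_cons, List.foldr_nil]
  rw [Nat.xor_comm _ 0, List.foldr_assoc]
  rfl

@[simp] theorem altComp_zero (n : ℕ) (α β : ℕ → ℕ) (x : ℕ) :
    altComp n 0 α β x = (x + β 0) % 2 ^ n := rfl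

theorem altComp_succ (n m : ℕ) (α β : ℕ → ℕ) (x : ℕ) :
    altComp n (m + 1) α β x = ((altComp n m α β x ^^^ α (m + 1)) + β (m + 1)) % 2 ^ n := by
  rw [altComp, List.range_succ, List.foldl_append]
  rfl

theorem altComp_xor_two_pow_modEq {n k : ℕ} (hk : k + 2 ≤ n) (α β : ℕ → ℕ) (x m : ℕ) :
    altComp n m α β (x ^^^ 2 ^ k) ≡ altComp n m α β x
      + 2 ^ k * (1 + 2 * (x.testBit k ^^ (xorSum α m).testBit k).toNat) [MOD 2 ^ (k + 2)] := by
  induction m with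
  | zero =>
    simp only [altComp_zero, xorSum_zero, Nat.zero_testBit, Bool.xor_false]
    exact (Nat.xor_two_pow_modEq x k).add_right_mod_two_pow hk (β 0)
  | succ m ih =>
    rw [altComp_succ, altComp_succ, xorSum_succ, Nat.testBit_xor, ← Bool.xor_assoc]
    exact (ih.xor_of_add_two_pow_mul _).add_right_mod_two_pow hk _

theorem testBit_eq_testBit_xorSum {n m k : ℕ} (hk : k + 2 ≤ n) {α β : ℕ → ℕ} {γ : ℕ}
    (hF : ∀ x < 2 ^ n, altComp n m α β x = x ^^^ γ) :
    γ.testBit k = (xorSum α m).testBit k := by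
  have h := altComp_xor_two_pow_modEq hk α β 0 m
  rw [Nat.zero_xor, hF _ (Nat.pow_lt_pow_right (by norm_num) (by omega)),
    hF 0 (Nat.two_pow_pos n), Nat.zero_xor, Nat.zero_testBit, Bool.false_xor,
    Nat.xor_comm] at h
  have h' := Nat.ModEq.add_left_cancel' γ ((Nat.xor_two_pow_modEq γ k).symm.trans h)
  rw [pow_add] at h'
  have hbits := Nat.ModEq.mul_left_cancel' (Nat.two_pow_pos k).ne' h'
  revert hbits
  cases γ.testBit k <;> cases (xorSum α m).testBit k <;> decide

theorem stmt_10_general (n m : ℕ) (α β : ℕ → ℕ) (γ : ℕ)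
    (hF : ∀ x < 2 ^ n, altComp n m α β x = x ^^^ γ) :
    γ % 2 ^ (n - 1) = (((List.range m).map (fun i => α (i + 1))).foldr (· ^^^ ·) 0) % 2 ^ (n - 1) := by
  apply Nat.eq_of_testBit_eq
  intro i
  simp only [Nat.testBit_mod_two_pow]
  by_cases hi : i < n - 1
  · simp only [hi, decide_true, Bool.true_and]
    exact testBit_eq_testBit_xorSum (by omega) hF
  · simp [hi]

/-- If such an alternating composition satisfies `F(x) = x ⊕ γ` for all `x`,
then `γ ≡ α_1 ⊕ ⋯ ⊕ α_m (mod 2^{n-1})`. -/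
theorem stmt_10 (n m : ℕ) (hn : 1 ≤ n) (hm : 1 ≤ m)
    (α β : ℕ → ℕ) (hα : ∀ i, α i < 2 ^ n) (hβ : ∀ i, β i < 2 ^ n)
    (γ : ℕ) (hγ : γ < 2 ^ n)
    (hF : ∀ x < 2 ^ n, altComp n m α β x = x ^^^ γ) :
    γ % 2 ^ (n - 1) = (((List.range m).map (fun i => α (i + 1))).foldr (· ^^^ ·) 0) % 2 ^ (n - 1) :=
  stmt_10_general n m α β γ hF
end

section
/- Let F : {0,…,2^n − 1} → {0,…,2^n − 1} be any composition (in any order) of maps of the form x ↦ x ⊕ α_i (i = 1,…,m) and x ↦ (x + β_j) mod 2^n. If F(x) = x ⊕ γ for all x, then γ ∈ {α_1 ⊕ ⋯ ⊕ α_m, (α_1 ⊕ ⋯ ⊕ α_m) ⊕ 2^{n−1}}. -/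
/-!
Fix `l` with `l + 2 ≤ n` and a pair `y, y'` with `y' ≡ y + 2^l (mod 2^(l+1))`, and follow
`y' - y` modulo `2^(l+2)` along the steps. A modular addition leaves it unchanged, since
`2^(l+2) ∣ 2^n`; an XOR with `a` keeps the pair condition and adds `2^(l+1)` times bit `l`
of `a`. Starting from `0, 2^l`, the composition `F` therefore gives
`F(2^l) - F(0) ≡ 2^l + 2^(l+1)·A_l`, where `A` is the XOR of all masks, whereas
`F = (· ⊕ γ)` gives `2^l + 2^(l+1)·γ_l`. So `γ` and `A` agree on all bits below `n - 1`.
-/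

/-- One encryption step: `(true, c)` is the XOR-mask `x ↦ x ⊕ c`, and
`(false, c)` is the modular addition `x ↦ (x + c) mod 2^n`. -/
def applySteps (n : ℕ) (L : List (Bool × ℕ)) (x : ℕ) : ℕ :=
  L.foldl (fun y p => if p.1 then y ^^^ p.2 else (y + p.2) % 2 ^ n) x

def xorMasks (L : List (Bool × ℕ)) : ℕ :=
  (L.filter (·.1)).foldr (fun p acc => p.2 ^^^ acc) 0

@[simp] lemma xorMasks_cons_true (a : ℕ) (L : List (Bool × ℕ)) :
    xorMasks ((true, a) :: L) = a ^^^ xorMasks L := rfl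

@[simp] lemma xorMasks_cons_false (c : ℕ) (L : List (Bool × ℕ)) :
    xorMasks ((false, c) :: L) = xorMasks L := rfl

lemma applySteps_cons_true (n a : ℕ) (L : List (Bool × ℕ)) (x : ℕ) :
    applySteps n ((true, a) :: L) x = applySteps n L (x ^^^ a) := rfl

lemma applySteps_cons_false (n c : ℕ) (L : List (Bool × ℕ)) (x : ℕ) :
    applySteps n ((false, c) :: L) x = applySteps n L ((x + c) % 2 ^ n) := rfl

lemma xorMasks_lt_two_pow {n : ℕ} {L : List (Bool × ℕ)} (hL : ∀ p ∈ L, p.2 < 2 ^ n) :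
    xorMasks L < 2 ^ n := by
  induction L with
  | nil => exact Nat.two_pow_pos n
  | cons p L ih =>
    have hL' : ∀ q ∈ L, q.2 < 2 ^ n := fun q hq => hL q (List.mem_cons_of_mem _ hq)
    obtain ⟨_ | _, a⟩ := p
    · exact ih hL'
    · exact Nat.xor_lt_two_pow (hL _ List.mem_cons_self) (ih hL')

lemma applySteps_lt_two_pow {n : ℕ} {L : List (Bool × ℕ)} (hL : ∀ p ∈ L, p.2 < 2 ^ n) {x : ℕ}
    (hx : x < 2 ^ n) : applySteps n L x < 2 ^ n := by
  induction L generalizing x with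
  | nil => exact hx
  | cons p L ih =>
    have hL' : ∀ q ∈ L, q.2 < 2 ^ n := fun q hq => hL q (List.mem_cons_of_mem _ hq)
    obtain ⟨_ | _, a⟩ := p
    · exact ih hL' (Nat.mod_lt _ (Nat.two_pow_pos n))
    · exact ih hL' (Nat.xor_lt_two_pow hx (hL _ List.mem_cons_self))

lemma xor_sub_xor_modEq_four {h h' : ℕ} (b : ℕ) (hh : (h' : ℤ) ≡ h + 1 [ZMOD 2]) :
    ((h' ^^^ b : ℕ) : ℤ) - (h ^^^ b : ℕ) ≡ h' - h + 2 * b [ZMOD 4] := by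
  -- Both sides only depend on `h`, `h'`, `b` modulo 4, which leaves finitely many cases.
  have key : ∀ u : ℕ, u < 4 → ∀ v : ℕ, v < 4 → ∀ w : ℕ, w < 4 → (v : ℤ) ≡ u + 1 [ZMOD 2] →
      ((v ^^^ w : ℕ) : ℤ) - (u ^^^ w : ℕ) ≡ v - u + 2 * w [ZMOD 4] := by
    decide
  have hmod (y : ℕ) : ((y % 4 : ℕ) : ℤ) ≡ y [ZMOD 4] := by
    rw [Int.natCast_mod]; exact Int.mod_modEq _ _
  have hxor (y : ℕ) : ((y ^^^ b : ℕ) : ℤ) ≡ (y % 4 ^^^ b % 4 : ℕ) [ZMOD 4] := by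
    rw [← Nat.xor_mod_two_pow (n := 2)]; exact (hmod _).symm
  have hh4 : ((h' % 4 : ℕ) : ℤ) ≡ (h % 4 : ℕ) + 1 [ZMOD 2] :=
    ((hmod h').of_dvd (by norm_num)).trans
      (hh.trans (((hmod h).of_dvd (by norm_num)).add_right 1).symm)
  calc _ ≡ ((h' % 4 ^^^ b % 4 : ℕ) : ℤ) - (h % 4 ^^^ b % 4 : ℕ) [ZMOD 4] :=
        (hxor h').sub (hxor h)
    _ ≡ (h' % 4 : ℕ) - (h % 4 : ℕ) + 2 * (b % 4 : ℕ) [ZMOD 4] :=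
      key _ (Nat.mod_lt _ four_pos) _ (Nat.mod_lt _ four_pos) _ (Nat.mod_lt _ four_pos) hh4
    _ ≡ h' - h + 2 * b [ZMOD 4] := ((hmod h').sub (hmod h)).add ((hmod b).mul_left 2)

lemma natCast_eq_mod_add_div (y T : ℕ) : (y : ℤ) = (y % T : ℕ) + T * (y / T : ℕ) := by
  exact_mod_cast (Nat.mod_add_div y T).symm

lemma xor_sub_xor_modEq {l x x' : ℕ} (a : ℕ) (hx : (x' : ℤ) ≡ x + 2 ^ l [ZMOD 2 ^ (l + 1)]) :
    ((x' ^^^ a : ℕ) : ℤ) - (x ^^^ a : ℕ) ≡ x' - x + 2 ^ (l + 1) * (a / 2 ^ l : ℕ)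
      [ZMOD 2 ^ (l + 2)] := by
  -- `x` and `x'` share their low `l` bits, so everything reduces to the quotients by `2 ^ l`.
  have hlow : x' % 2 ^ l = x % 2 ^ l := by
    have : (x' : ℤ) ≡ x [ZMOD (2 ^ l : ℕ)] := by
      push_cast
      exact (hx.of_dvd (pow_dvd_pow 2 l.le_succ)).trans Int.add_modEq_right
    exact Int.natCast_modEq_iff.mp this
  have hhigh : ((x' / 2 ^ l : ℕ) : ℤ) ≡ (x / 2 ^ l : ℕ) + 1 [ZMOD 2] := by
    refine Int.ModEq.mul_left_cancel' (c := 2 ^ l) (by positivity) ?_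
    rw [natCast_eq_mod_add_div x' (2 ^ l), natCast_eq_mod_add_div x (2 ^ l), hlow] at hx
    push_cast at hx
    rw [← pow_succ, mul_add_one]
    exact Int.ModEq.add_left_cancel' _ (by rwa [add_assoc] at hx)
  rw [natCast_eq_mod_add_div (x' ^^^ a) (2 ^ l), natCast_eq_mod_add_div (x ^^^ a) (2 ^ l),
    natCast_eq_mod_add_div x' (2 ^ l), natCast_eq_mod_add_div x (2 ^ l),
    Nat.xor_mod_two_pow, Nat.xor_mod_two_pow, Nat.xor_div_two_pow, Nat.xor_div_two_pow, hlow]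
  have := (xor_sub_xor_modEq_four (a / 2 ^ l) hhigh).mul_left' (c := 2 ^ l)
  convert this using 1 <;> push_cast <;> ring

lemma add_mod_sub_add_mod_modEq {M : ℤ} {N : ℕ} (hMN : M ∣ N) (y y' c : ℕ) :
    (((y' + c) % N : ℕ) : ℤ) - ((y + c) % N : ℕ) ≡ y' - y [ZMOD M] := by
  have hmod (z : ℕ) : (((z + c) % N : ℕ) : ℤ) ≡ z + c [ZMOD M] := by
    push_cast
    exact (Int.mod_modEq _ _).of_dvd hMN
  simpa using (hmod y').sub (hmod y)

lemma two_pow_mul_xor_modEq (l u v : ℕ) :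
    (2 : ℤ) ^ (l + 1) * (u ^^^ v : ℕ) ≡ 2 ^ (l + 1) * u + 2 ^ (l + 1) * v
      [ZMOD 2 ^ (l + 2)] := by
  rw [← mul_add, pow_succ _ (l + 1)]
  exact Int.ModEq.mul_left' (by exact_mod_cast Nat.xor_mod_two_eq (m := u) (n := v))

lemma modEq_add_two_pow_of_sub_modEq {l : ℕ} {u u' v v' k : ℤ}
    (h : u' - u ≡ v' - v + 2 ^ (l + 1) * k [ZMOD 2 ^ (l + 2)])
    (hv : v' ≡ v + 2 ^ l [ZMOD 2 ^ (l + 1)]) : u' ≡ u + 2 ^ l [ZMOD 2 ^ (l + 1)] := by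
  have h' := h.of_dvd (pow_dvd_pow 2 (l + 1).le_succ)
  rw [Int.modEq_iff_dvd] at h' hv ⊢
  have := dvd_sub (dvd_add hv h') (dvd_mul_right (2 ^ (l + 1) : ℤ) k)
  rwa [show (u + 2 ^ l) - u' = (v + 2 ^ l - v') + (v' - v + 2 ^ (l + 1) * k - (u' - u))
    - 2 ^ (l + 1) * k by ring]

theorem applySteps_sub_modEq {n l : ℕ} (hl : l + 2 ≤ n) (L : List (Bool × ℕ)) {y y' : ℕ}
    (h : (y' : ℤ) ≡ y + 2 ^ l [ZMOD 2 ^ (l + 1)]) :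
    (applySteps n L y' : ℤ) - applySteps n L y ≡
      y' - y + 2 ^ (l + 1) * (xorMasks L / 2 ^ l : ℕ) [ZMOD 2 ^ (l + 2)] := by
  induction L generalizing y y' with
  | nil => simp [applySteps, xorMasks]
  | cons p L ih =>
    obtain ⟨_ | _, c⟩ := p
    · have hstep := add_mod_sub_add_mod_modEq (M := 2 ^ (l + 2)) (N := 2 ^ n)
        (by exact_mod_cast pow_dvd_pow 2 hl) y y' c
      have := ih (modEq_add_two_pow_of_sub_modEq (k := 0) (hstep.trans (by simp)) h)
      simpa [applySteps_cons_false] using this.trans (hstep.add_right _)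
    · have hstep := xor_sub_xor_modEq c h
      have := ih (modEq_add_two_pow_of_sub_modEq hstep h)
      rw [applySteps_cons_true, applySteps_cons_true, xorMasks_cons_true, Nat.xor_div_two_pow]
      calc _ ≡ _ [ZMOD 2 ^ (l + 2)] := this
        _ ≡ (y' : ℤ) - y + 2 ^ (l + 1) * (c / 2 ^ l : ℕ)
            + 2 ^ (l + 1) * (xorMasks L / 2 ^ l : ℕ) [ZMOD 2 ^ (l + 2)] := hstep.add_right _
        _ ≡ _ [ZMOD 2 ^ (l + 2)] := by
          rw [add_assoc]
          exact (two_pow_mul_xor_modEq l _ _).symm.add_left _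

theorem div_two_pow_modEq_xorMasks_of_applySteps_eq_xor {n l γ : ℕ} (hl : l + 2 ≤ n)
    {L : List (Bool × ℕ)} (hF : ∀ x < 2 ^ n, applySteps n L x = x ^^^ γ) :
    γ / 2 ^ l ≡ xorMasks L / 2 ^ l [MOD 2] := by
  have hpair : ((2 ^ l : ℕ) : ℤ) ≡ (0 : ℕ) + 2 ^ l [ZMOD 2 ^ (l + 1)] := by simp
  have hsteps := applySteps_sub_modEq hl L hpair
  rw [hF _ (Nat.pow_lt_pow_right one_lt_two (by omega)), hF 0 (Nat.two_pow_pos n)] at hsteps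
  have hbits := Int.ModEq.add_left_cancel' _ ((xor_sub_xor_modEq γ hpair).symm.trans hsteps)
  rw [pow_succ _ (l + 1)] at hbits
  exact Int.natCast_modEq_iff.mp (Int.ModEq.mul_left_cancel' (by positivity) hbits)

lemma eq_or_eq_xor_two_pow_of_mod_two_pow_pred_eq {n a b : ℕ} (ha : a < 2 ^ n) (hb : b < 2 ^ n)
    (h : a % 2 ^ (n - 1) = b % 2 ^ (n - 1)) : a = b ∨ a = b ^^^ 2 ^ (n - 1) := by
  obtain ⟨q, hq⟩ : 2 ^ (n - 1) ∣ a ^^^ b :=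
    Nat.dvd_of_mod_eq_zero (by rw [Nat.xor_mod_two_pow, h, Nat.xor_self])
  have hq2 : q < 2 := by
    refine Nat.lt_of_mul_lt_mul_left (a := 2 ^ (n - 1)) ?_
    calc 2 ^ (n - 1) * q = a ^^^ b := hq.symm
      _ < 2 ^ n := Nat.xor_lt_two_pow ha hb
      _ ≤ 2 ^ (n - 1) * 2 := by rw [← pow_succ]; exact Nat.pow_le_pow_right two_pos (by omega)
  have hab : a = b ^^^ (a ^^^ b) := by
    rw [Nat.xor_comm a b, ← Nat.xor_assoc, Nat.xor_self, Nat.zero_xor]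
  interval_cases q
  · exact Or.inl (xor_eq_zero_iff.mp (by rw [hq, mul_zero]))
  · exact Or.inr (by rw [hab, hq, mul_one])

theorem stmt_11_general (n : ℕ) (L : List (Bool × ℕ))
    (hL : ∀ p ∈ L, p.2 < 2 ^ n)
    (γ : ℕ)
    (hF : ∀ x < 2 ^ n, applySteps n L x = x ^^^ γ) :
    γ = (L.filter (·.1)).foldr (fun p acc => p.2 ^^^ acc) 0 ∨
    γ = ((L.filter (·.1)).foldr (fun p acc => p.2 ^^^ acc) 0) ^^^ 2 ^ (n - 1) := by
  change γ = xorMasks L ∨ γ = xorMasks L ^^^ 2 ^ (n - 1)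
  have hγ : γ < 2 ^ n := by
    simpa [hF 0 (Nat.two_pow_pos n)] using applySteps_lt_two_pow hL (Nat.two_pow_pos n)
  refine eq_or_eq_xor_two_pow_of_mod_two_pow_pred_eq hγ (xorMasks_lt_two_pow hL)
    (Nat.eq_of_testBit_eq fun i => ?_)
  rw [Nat.testBit_mod_two_pow, Nat.testBit_mod_two_pow]
  by_cases hi : i < n - 1
  · have hbit : γ / 2 ^ i % 2 = xorMasks L / 2 ^ i % 2 :=
      div_two_pow_modEq_xorMasks_of_applySteps_eq_xor (by omega) hF
    simp only [Nat.testBit_eq_decide_div_mod_eq, hbit]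
  · simp [hi]

/-- If an arbitrary composition (in any order) of XOR-masks `x ↦ x ⊕ αᵢ` and
modular additions `x ↦ (x + βⱼ) mod 2^n` equals `x ↦ x ⊕ γ` on `{0,…,2^n−1}`,
then `γ` is either the XOR of all the masks or that value with the most
significant bit flipped. -/
theorem stmt_11 (n : ℕ) (hn : 1 ≤ n) (L : List (Bool × ℕ))
    (hL : ∀ p ∈ L, p.2 < 2 ^ n)
    (γ : ℕ) (hγ : γ < 2 ^ n)
    (hF : ∀ x < 2 ^ n, applySteps n L x = x ^^^ γ) :
    γ = (L.filter (·.1)).foldr (fun p acc => p.2 ^^^ acc) 0 ∨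
    γ = ((L.filter (·.1)).foldr (fun p acc => p.2 ^^^ acc) 0) ^^^ 2 ^ (n - 1) :=
  stmt_11_general n L hL γ hF
end
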